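/- Let x = (x₁, x₂)ᵀ ∈ 𝔽_q((T^{-1}))² with |x| = |x₂| > 0 and slope ξ = x₁/x₂ irrational with |ξ| ≤ 1, with convergents P_n/Q_n to ξ, and let y = (y₁, y₂)ᵀ ∈ 𝔽_q((T^{-1}))² with y₂ ≠ 0 and slope y₁/y₂ = A/B ∈ 𝔽_q(T) in lowest terms with |A/B| ≤ 1. Then for every index k with |Q_k| > |B·x₂/y₂|, every γ ∈ SL₂(𝔽_q[T]) with |γ| < |y₂·Q_k·Q_{k+1}/x₂| satisfies |γx − y| ≥ |x₂|/(|B|·|Q_k|). -/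

import Mathlib

open Polynomial Filter
open scoped Classical ENNReal

noncomputable section

variable (Fq : Type) [Field Fq] [Fintype Fq]

/-- The element `T` inside the Laurent-series field `𝔽_q((T⁻¹))`, which we realize
as the field of Hahn/Laurent series in the variable `T⁻¹`. -/
def Tel : LaurentSeries Fq := HahnSeries.single (-1 : ℤ) 1

/-- The inverse variable `T⁻¹` itself. -/
def TinvEl : LaurentSeries Fq := HahnSeries.single (1 : ℤ) 1

/-- The embedding of the polynomial ring `𝔽_q[T]` into `𝔽_q((T⁻¹))`,
sending `T` to `Tel`. -/
def polyToL (P : Polynomial Fq) : LaurentSeries Fq :=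
  Polynomial.eval₂ HahnSeries.C (Tel Fq) P

/-- The absolute value `|x| = q ^ (deg x)` on `𝔽_q((T⁻¹))`, with `|0| = 0`.
Here the degree of `x ≠ 0` is minus the order of `x` as a series in `T⁻¹`. -/
def labs (x : LaurentSeries Fq) : ℝ :=
  if x = 0 then 0 else (Fintype.card Fq : ℝ) ^ (-x.order)

/-- `‖x‖`: the distance from `x` to the nearest polynomial. -/
def lnorm (x : LaurentSeries Fq) : ℝ :=
  ⨅ P : Polynomial Fq, labs Fq (x - polyToL Fq P)

/-- `x ∈ 𝔽_q(T)`, i.e. `x` is rational. -/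
def IsRat (x : LaurentSeries Fq) : Prop :=
  ∃ P Q : Polynomial Fq, Q ≠ 0 ∧ polyToL Fq Q * x = polyToL Fq P


/-- `SL₂(𝔽_q[T])`. -/
abbrev SL2 := Matrix.SpecialLinearGroup (Fin 2) (Polynomial Fq)

/-- Maximum of the absolute values of the entries of a `2 × 2` matrix. -/
def matAbs (M : Matrix (Fin 2) (Fin 2) (LaurentSeries Fq)) : ℝ :=
  max (max (labs Fq (M 0 0)) (labs Fq (M 0 1))) (max (labs Fq (M 1 0)) (labs Fq (M 1 1)))

/-- The size `|γ|` of a matrix `γ ∈ SL₂(𝔽_q[T])`. -/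
def gabs (γ : SL2 Fq) : ℝ :=
  matAbs Fq (((γ : Matrix (Fin 2) (Fin 2) (Polynomial Fq))).map (polyToL Fq))

/-- Maximum of the absolute values of the coordinates of a vector. -/
def vabs (v : Fin 2 → LaurentSeries Fq) : ℝ :=
  max (labs Fq (v 0)) (labs Fq (v 1))

/-- The standard linear action of `SL₂(𝔽_q[T])` on `𝔽_q((T⁻¹))²`. -/
def act (γ : SL2 Fq) (v : Fin 2 → LaurentSeries Fq) : Fin 2 → LaurentSeries Fq :=
  (((γ : Matrix (Fin 2) (Fin 2) (Polynomial Fq))).map (polyToL Fq)).mulVec v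

/-- The asymptotic Diophantine exponent `μ(x, y)` (as an element of `ℝ≥0∞`). -/
def muExp (x y : Fin 2 → LaurentSeries Fq) : ℝ≥0∞ :=
  ⨆ m ∈ {m : ℝ |
      {γ : SL2 Fq | vabs Fq (act Fq γ x - y) ≤ gabs Fq γ ^ (-m)}.Infinite},
    ENNReal.ofReal m

/-- The uniform Diophantine exponent `μ̂(x, y)` (as an element of `ℝ≥0∞`). -/
def muHatExp (x y : Fin 2 → LaurentSeries Fq) : ℝ≥0∞ :=
  ⨆ m ∈ {m : ℝ | ∀ᶠ H : ℝ in atTop, ∃ γ : SL2 Fq,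
      gabs Fq γ ≤ H ∧ vabs Fq (act Fq γ x - y) ≤ H ^ (-m)},
    ENNReal.ofReal m

/-- The irrationality exponent `ω(ξ)` (as an element of `ℝ≥0∞`). -/
def omegaExp (ξ : LaurentSeries Fq) : ℝ≥0∞ :=
  ⨆ w ∈ {w : ℝ |
      {Q : Polynomial Fq | Q ≠ 0 ∧
        lnorm Fq (polyToL Fq Q * ξ) ≤ labs Fq (polyToL Fq Q) ^ (-w)}.Infinite},
    ENNReal.ofReal w

/-- Numerators `P_n` of the continued-fraction convergents associated with
partial quotients `C 0 = A₀, C 1 = A₁, …`; indices are shifted by `2`, so that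
`cfNum C 0 = P₋₂ = 0`, `cfNum C 1 = P₋₁ = 1`, and `cfNum C (n + 2) = Pₙ`. -/
def cfNum (C : ℕ → Polynomial Fq) : ℕ → Polynomial Fq
  | 0 => 0
  | 1 => 1
  | n + 2 => C n * cfNum C (n + 1) + cfNum C n

/-- Denominators `Q_n` of the continued-fraction convergents, with
`cfDen C 0 = Q₋₂ = 1`, `cfDen C 1 = Q₋₁ = 0`, and `cfDen C (n + 2) = Qₙ`. -/
def cfDen (C : ℕ → Polynomial Fq) : ℕ → Polynomial Fq
  | 0 => 1
  | 1 => 0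
  | n + 2 => C n * cfDen C (n + 1) + cfDen C n

/-- `ξ` has continued-fraction expansion `[C 0; C 1, C 2, …]`, expressed by the
characteristic property `|Qₙ ξ − Pₙ| = |Q_{n+1}|⁻¹` of the convergents. -/
def HasCF (ξ : LaurentSeries Fq) (C : ℕ → Polynomial Fq) : Prop :=
  ∀ n : ℕ, labs Fq (polyToL Fq (cfDen Fq C (n + 2)) * ξ - polyToL Fq (cfNum Fq C (n + 2)))
    = (labs Fq (polyToL Fq (cfDen Fq C (n + 3))))⁻¹

/-- The convergent matrix `M_k` with rows `(Q_k, −P_k)` and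
`((−1)^(k−1) Q_{k−1}, (−1)^k P_{k−1})`. -/
def cfM (C : ℕ → Polynomial Fq) (k : ℕ) : Matrix (Fin 2) (Fin 2) (Polynomial Fq) :=
  !![cfDen Fq C (k + 2), -cfNum Fq C (k + 2);
     (-1 : Polynomial Fq) ^ (k + 1) * cfDen Fq C (k + 1), (-1 : Polynomial Fq) ^ k * cfNum Fq C (k + 1)]

/-- The unipotent matrix `U(a)`. -/
def Umat (a : Polynomial Fq) : Matrix (Fin 2) (Fin 2) (Polynomial Fq) :=
  !![1, a; 0, 1]

/-!
Suppose `|γ x - y| < |x₂| / (|B| |Q_k|)`. Write the row `(e, -g) = (B, -A) γ` as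
`s (Q_k, -P_k) + t (Q_{k+1}, -P_{k+1})`; this is possible because consecutive convergent rows
form a basis of `𝔽_q[T]²`. Since `(B, -A)` annihilates `y`, the linear form `e x₁ - g x₂`
equals `(B, -A) (γ x - y)`, so it is smaller than `|x₂| / |Q_k|`; recovering `x₂` from `γ x`
through `γ⁻¹` shows moreover `|e| < |Q_{k+1}|`. If `t ≠ 0`, this bound forces
`|s Q_k| = |t Q_{k+1}|`, and then `|e ξ - g| = |t| / |Q_k| ≥ 1 / |Q_k|`, a contradiction.
If `t = 0`, then `(B, -A) = s (Q_k, -P_k) γ⁻¹` gives `|c P_k + d Q_k| ≤ |B|`, and writing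
`Q_k y₂` through the second row `(c, d)` of `γ` expresses it as a sum of three terms, each
smaller than `|Q_k y₂|`.
-/

section AbsoluteValue

variable {Fq}

lemma one_lt_card_real : (1 : ℝ) < Fintype.card Fq := by
  exact_mod_cast Fintype.one_lt_card

lemma labs_zero : labs Fq 0 = 0 := if_pos rfl

lemma labs_of_ne_zero {x : LaurentSeries Fq} (hx : x ≠ 0) :
    labs Fq x = (Fintype.card Fq : ℝ) ^ (-x.order) := if_neg hx

lemma labs_pos {x : LaurentSeries Fq} (hx : x ≠ 0) : 0 < labs Fq x := by
  have hq : (0 : ℝ) < Fintype.card Fq := zero_lt_one.trans one_lt_card_real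
  rw [labs_of_ne_zero hx]
  positivity

lemma labs_nonneg (x : LaurentSeries Fq) : 0 ≤ labs Fq x := by
  rcases eq_or_ne x 0 with rfl | hx
  · exact labs_zero.ge
  · exact (labs_pos hx).le

lemma labs_one : labs Fq 1 = 1 := by
  rw [labs_of_ne_zero one_ne_zero, HahnSeries.order_one, neg_zero, zpow_zero]

lemma labs_mul (x y : LaurentSeries Fq) : labs Fq (x * y) = labs Fq x * labs Fq y := by
  rcases eq_or_ne x 0 with rfl | hx
  · simp [labs_zero]
  rcases eq_or_ne y 0 with rfl | hy
  · simp [labs_zero]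
  rw [labs_of_ne_zero (mul_ne_zero hx hy), labs_of_ne_zero hx, labs_of_ne_zero hy,
    HahnSeries.order_mul hx hy, neg_add, zpow_add₀ (zero_lt_one.trans one_lt_card_real).ne']

lemma labs_neg (x : LaurentSeries Fq) : labs Fq (-x) = labs Fq x := by
  simp only [labs, neg_eq_zero, HahnSeries.order_neg]

lemma labs_inv (x : LaurentSeries Fq) : labs Fq x⁻¹ = (labs Fq x)⁻¹ := by
  rcases eq_or_ne x 0 with rfl | hx
  · simp [labs_zero]
  refine eq_inv_of_mul_eq_one_left ?_
  rw [← labs_mul, inv_mul_cancel₀ hx, labs_one]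

lemma labs_div (x y : LaurentSeries Fq) : labs Fq (x / y) = labs Fq x / labs Fq y := by
  rw [div_eq_mul_inv, labs_mul, labs_inv, div_eq_mul_inv]

lemma labs_add_le (x y : LaurentSeries Fq) :
    labs Fq (x + y) ≤ max (labs Fq x) (labs Fq y) := by
  rcases eq_or_ne x 0 with rfl | hx
  · simp
  rcases eq_or_ne y 0 with rfl | hy
  · simp
  rcases eq_or_ne (x + y) 0 with hxy | hxy
  · rw [hxy, labs_zero]
    exact le_max_of_le_left (labs_nonneg x)
  rw [labs_of_ne_zero hxy, labs_of_ne_zero hx, labs_of_ne_zero hy]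
  rcases min_le_iff.mp (HahnSeries.min_order_le_order_add hxy) with h | h
  · exact le_max_of_le_left (zpow_le_zpow_right₀ one_lt_card_real.le (neg_le_neg h))
  · exact le_max_of_le_right (zpow_le_zpow_right₀ one_lt_card_real.le (neg_le_neg h))

lemma labs_sub_le (x y : LaurentSeries Fq) :
    labs Fq (x - y) ≤ max (labs Fq x) (labs Fq y) := by
  simpa only [sub_eq_add_neg, labs_neg] using labs_add_le x (-y)

lemma labs_add_eq_left {x y : LaurentSeries Fq} (h : labs Fq y < labs Fq x) :
    labs Fq (x + y) = labs Fq x := by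
  refine le_antisymm ((labs_add_le x y).trans (max_eq_left h.le).le) ?_
  have := labs_sub_le (x + y) y
  rw [add_sub_cancel_right] at this
  exact (le_max_iff.mp this).resolve_right h.not_ge

lemma labs_add_eq_right {x y : LaurentSeries Fq} (h : labs Fq x < labs Fq y) :
    labs Fq (x + y) = labs Fq y := by
  rw [add_comm, labs_add_eq_left h]

end AbsoluteValue

section Embedding

variable {K : Type} [Field K]

lemma polyToL_zero : polyToL K 0 = 0 :=
  eval₂_zero _ _

lemma polyToL_one : polyToL K 1 = 1 :=
  eval₂_one _ _

lemma polyToL_add (P Q : K[X]) : polyToL K (P + Q) = polyToL K P + polyToL K Q :=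
  eval₂_add _ _

lemma polyToL_sub (P Q : K[X]) : polyToL K (P - Q) = polyToL K P - polyToL K Q :=
  (eval₂RingHom HahnSeries.C (Tel K)).map_sub P Q

lemma polyToL_mul (P Q : K[X]) : polyToL K (P * Q) = polyToL K P * polyToL K Q :=
  eval₂_mul _ _

end Embedding

section Degree

variable {Fq}

lemma labs_polyToL_C_mul_X_pow {a : Fq} (ha : a ≠ 0) (n : ℕ) :
    labs Fq (polyToL Fq (C a * X ^ n)) = (Fintype.card Fq : ℝ) ^ n := by
  have hC : labs Fq (HahnSeries.C a) = 1 := by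
    rw [labs_of_ne_zero (HahnSeries.C_ne_zero ha), HahnSeries.order_C, neg_zero, zpow_zero]
  have hT : labs Fq (Tel Fq) = Fintype.card Fq := by
    rw [Tel, labs_of_ne_zero (HahnSeries.single_ne_zero one_ne_zero),
      HahnSeries.order_single one_ne_zero, neg_neg, zpow_one]
  induction n with
  | zero => rw [pow_zero, mul_one, pow_zero, polyToL, eval₂_C, hC]
  | succ n ih =>
    rw [pow_succ, ← mul_assoc, polyToL_mul, labs_mul, ih, polyToL, eval₂_X, hT, pow_succ]

lemma labs_polyToL {P : Fq[X]} (hP : P ≠ 0) :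
    labs Fq (polyToL Fq P) = (Fintype.card Fq : ℝ) ^ P.natDegree := by
  induction hn : P.natDegree using Nat.strong_induction_on generalizing P with
  | _ n ih =>
    have hlead := labs_polyToL_C_mul_X_pow (leadingCoeff_ne_zero.mpr hP) n
    rw [← eraseLead_add_C_mul_X_pow P, polyToL_add, hn]
    rcases eq_or_ne P.eraseLead 0 with h0 | hne
    · rw [h0, polyToL_zero, zero_add, hlead]
    have hlt := hn ▸ (eraseLead_natDegree_lt_or_eraseLead_eq_zero P).resolve_right hne
    have hsmall :
        labs Fq (polyToL Fq P.eraseLead) < labs Fq (polyToL Fq (C P.leadingCoeff * X ^ n)) := by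
      rw [ih _ hlt hne rfl, hlead]
      exact pow_lt_pow_right₀ one_lt_card_real hlt
    rw [labs_add_eq_right hsmall, hlead]

lemma one_le_labs_polyToL {P : Fq[X]} (hP : P ≠ 0) : 1 ≤ labs Fq (polyToL Fq P) := by
  rw [labs_polyToL hP]
  exact one_le_pow₀ one_lt_card_real.le

lemma polyToL_ne_zero {P : Fq[X]} (hP : P ≠ 0) : polyToL Fq P ≠ 0 := fun h =>
  (one_le_labs_polyToL hP).not_gt (by rw [h, labs_zero]; exact zero_lt_one)

lemma one_lt_labs_polyToL {P : Fq[X]} (hP : 0 < P.natDegree) : 1 < labs Fq (polyToL Fq P) := by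
  rw [labs_polyToL (ne_zero_of_natDegree_gt hP)]
  exact one_lt_pow₀ one_lt_card_real hP.ne'

end Degree

section ContinuedFractions

lemma exists_mul_add_mul_eq_of_isUnit {R : Type*} [CommRing R] {P₀ Q₀ P₁ Q₁ : R}
    (h : IsUnit (P₀ * Q₁ - P₁ * Q₀)) (e g : R) :
    ∃ s t : R, s * Q₀ + t * Q₁ = e ∧ s * P₀ + t * P₁ = g := by
  obtain ⟨u, hu⟩ := h
  refine ⟨↑u⁻¹ * (Q₁ * g - P₁ * e), ↑u⁻¹ * (P₀ * e - Q₀ * g), ?_, ?_⟩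
  · linear_combination (e * u.inv_mul) - ↑u⁻¹ * e * hu
  · linear_combination (g * u.inv_mul) - ↑u⁻¹ * g * hu

variable {K : Type} [Field K]

lemma cfNum_mul_cfDen_succ_sub (C : ℕ → K[X]) (n : ℕ) :
    cfNum K C n * cfDen K C (n + 1) - cfNum K C (n + 1) * cfDen K C n = (-1) ^ (n + 1) := by
  induction n with
  | zero => simp [cfNum, cfDen]
  | succ n ih => rw [cfNum, cfDen, pow_succ, ← ih]; ring

lemma isUnit_cfNum_mul_cfDen_succ_sub (C : ℕ → K[X]) (n : ℕ) :
    IsUnit (cfNum K C n * cfDen K C (n + 1) - cfNum K C (n + 1) * cfDen K C n) := by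
  rw [cfNum_mul_cfDen_succ_sub]
  exact isUnit_neg_one.pow _

variable {Fq}

lemma labs_cfDen_lt_succ (C : ℕ → Fq[X]) (hdeg : ∀ i, 1 ≤ i → 0 < (C i).natDegree)
    (n : ℕ) :
    labs Fq (polyToL Fq (cfDen Fq C (n + 2))) < labs Fq (polyToL Fq (cfDen Fq C (n + 3))) := by
  induction n with
  | zero =>
    simp only [cfDen, mul_zero, zero_add, mul_one, add_zero]
    rw [polyToL_one, labs_one]
    exact one_lt_labs_polyToL (hdeg 1 le_rfl)
  | succ n ih =>
    have hpos := (labs_nonneg _).trans_lt ih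
    have hgrow : labs Fq (polyToL Fq (cfDen Fq C (n + 3)))
        < labs Fq (polyToL Fq (C (n + 2) * cfDen Fq C (n + 3))) := by
      rw [polyToL_mul, labs_mul]
      exact lt_mul_of_one_lt_left hpos (one_lt_labs_polyToL (hdeg _ (by omega)))
    rw [show cfDen Fq C (n + 1 + 3) = C (n + 2) * cfDen Fq C (n + 3) + cfDen Fq C (n + 2) from rfl,
      polyToL_add, labs_add_eq_left (ih.trans hgrow)]
    exact hgrow

lemma labs_cfDen_pos (C : ℕ → Fq[X]) (hdeg : ∀ i, 1 ≤ i → 0 < (C i).natDegree) (n : ℕ) :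
    0 < labs Fq (polyToL Fq (cfDen Fq C (n + 2))) := by
  cases n with
  | zero => simp [cfDen, polyToL_one, labs_one]
  | succ n => exact (labs_nonneg _).trans_lt (labs_cfDen_lt_succ C hdeg n)

lemma inv_labs_cfDen_le_labs_sub (C : ℕ → Fq[X]) (hdeg : ∀ i, 1 ≤ i → 0 < (C i).natDegree)
    {ξ : LaurentSeries Fq} (hcf : HasCF Fq ξ C) (k : ℕ) {s t : Fq[X]} (ht : t ≠ 0)
    (hst : labs Fq (polyToL Fq (s * cfDen Fq C (k + 2) + t * cfDen Fq C (k + 3)))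
      < labs Fq (polyToL Fq (cfDen Fq C (k + 3)))) :
    (labs Fq (polyToL Fq (cfDen Fq C (k + 2))))⁻¹ ≤
      labs Fq (polyToL Fq (s * cfDen Fq C (k + 2) + t * cfDen Fq C (k + 3)) * ξ
        - polyToL Fq (s * cfNum Fq C (k + 2) + t * cfNum Fq C (k + 3))) := by
  have hq₀ := labs_cfDen_pos C hdeg k
  have hq₀₁ := labs_cfDen_lt_succ C hdeg k
  have hq₁₂ := labs_cfDen_lt_succ C hdeg (k + 1)
  simp only [polyToL_add, polyToL_mul] at hst ⊢
  set S := polyToL Fq s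
  set T := polyToL Fq t
  set Q₀ := polyToL Fq (cfDen Fq C (k + 2))
  set Q₁ := polyToL Fq (cfDen Fq C (k + 3))
  set Q₂ := polyToL Fq (cfDen Fq C (k + 4))
  set P₀ := polyToL Fq (cfNum Fq C (k + 2))
  set P₁ := polyToL Fq (cfNum Fq C (k + 3))
  have hδ₀ : labs Fq (Q₀ * ξ - P₀) = (labs Fq Q₁)⁻¹ := hcf k
  have hδ₁ : labs Fq (Q₁ * ξ - P₁) = (labs Fq Q₂)⁻¹ := hcf (k + 1)
  have hT : labs Fq Q₁ ≤ labs Fq (T * Q₁) := by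
    rw [labs_mul]
    exact le_mul_of_one_le_left (labs_nonneg _) (one_le_labs_polyToL ht)
  -- the two terms of `S Q₀ + T Q₁` must cancel to bring it below `|Q₁|`
  have hST : labs Fq S * labs Fq Q₀ = labs Fq T * labs Fq Q₁ := by
    rw [← labs_mul, ← labs_mul]
    by_contra hne
    rcases lt_or_gt_of_ne hne with h | h
    · rw [labs_add_eq_right h] at hst
      exact hst.not_ge hT
    · rw [labs_add_eq_left h] at hst
      exact hst.not_ge (hT.trans h.le)
  have hSδ : labs Fq (S * (Q₀ * ξ - P₀)) = labs Fq T / labs Fq Q₀ := by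
    rw [labs_mul, hδ₀, eq_div_iff hq₀.ne', mul_right_comm, hST,
      mul_inv_cancel_right₀ (hq₀.trans hq₀₁).ne']
  have hTδ : labs Fq (T * (Q₁ * ξ - P₁)) < labs Fq T / labs Fq Q₀ := by
    rw [labs_mul, hδ₁, ← div_eq_mul_inv]
    exact div_lt_div_of_pos_left (zero_lt_one.trans_le (one_le_labs_polyToL ht)) hq₀
      (hq₀₁.trans hq₁₂)
  calc (labs Fq Q₀)⁻¹ ≤ labs Fq T / labs Fq Q₀ := by
        rw [inv_eq_one_div]
        exact div_le_div_of_nonneg_right (one_le_labs_polyToL ht) hq₀.le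
    _ = labs Fq (S * (Q₀ * ξ - P₀) + T * (Q₁ * ξ - P₁)) := by
        rw [labs_add_eq_left (hSδ ▸ hTδ), hSδ]
    _ = labs Fq ((S * Q₀ + T * Q₁) * ξ - (S * P₀ + T * P₁)) := by congr 1; ring

end ContinuedFractions

section Action

variable {K : Type} [Field K]

lemma act_apply_zero (γ : SL2 K) (x : Fin 2 → LaurentSeries K) :
    act K γ x 0 = polyToL K (γ 0 0) * x 0 + polyToL K (γ 0 1) * x 1 := by
  simp [act, Matrix.mulVec, dotProduct, Fin.sum_univ_two]

lemma act_apply_one (γ : SL2 K) (x : Fin 2 → LaurentSeries K) :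
    act K γ x 1 = polyToL K (γ 1 0) * x 0 + polyToL K (γ 1 1) * x 1 := by
  simp [act, Matrix.mulVec, dotProduct, Fin.sum_univ_two]

lemma polyToL_det_fin_two (γ : SL2 K) :
    polyToL K (γ 0 0) * polyToL K (γ 1 1) - polyToL K (γ 0 1) * polyToL K (γ 1 0) = 1 := by
  rw [← polyToL_mul, ← polyToL_mul, ← polyToL_sub, ← Matrix.det_fin_two, γ.det_coe,
    polyToL_one]

variable {Fq}

lemma labs_le_vabs (v : Fin 2 → LaurentSeries Fq) (i : Fin 2) : labs Fq (v i) ≤ vabs Fq v := by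
  fin_cases i
  exacts [le_max_left _ _, le_max_right _ _]

lemma labs_polyToL_le_gabs (γ : SL2 Fq) (i j : Fin 2) :
    labs Fq (polyToL Fq (γ i j)) ≤ gabs Fq γ := by
  fin_cases i <;> fin_cases j
  exacts [le_max_of_le_left (le_max_left _ _), le_max_of_le_left (le_max_right _ _),
    le_max_of_le_right (le_max_left _ _), le_max_of_le_right (le_max_right _ _)]

end Action

section Estimates

lemma mul_sub_mul_eq_mul_mul_div_sub {F : Type*} [Field F] {x : Fin 2 → F} (hx : x 1 ≠ 0)
    (e g : F) :
    e * x 0 - g * x 1 = x 1 * (e * (x 0 / x 1) - g) := by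
  field_simp

variable {Fq} (γ : SL2 Fq) (x y : Fin 2 → LaurentSeries Fq)

lemma labs_linearForm_le {A B : Fq[X]} (hy : polyToL Fq B * y 0 = polyToL Fq A * y 1)
    (hAB : labs Fq (polyToL Fq A) ≤ labs Fq (polyToL Fq B)) :
    labs Fq (polyToL Fq (B * γ 0 0 - A * γ 1 0) * x 0
        - polyToL Fq (A * γ 1 1 - B * γ 0 1) * x 1)
      ≤ labs Fq (polyToL Fq B) * vabs Fq (act Fq γ x - y) := by
  have hform : polyToL Fq (B * γ 0 0 - A * γ 1 0) * x 0
      - polyToL Fq (A * γ 1 1 - B * γ 0 1) * x 1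
      = polyToL Fq B * (act Fq γ x - y) 0 - polyToL Fq A * (act Fq γ x - y) 1 := by
    simp only [polyToL_sub, polyToL_mul, Pi.sub_apply, act_apply_zero, act_apply_one]
    linear_combination hy
  rw [hform]
  refine (labs_sub_le _ _).trans (max_le ?_ ?_) <;> rw [labs_mul]
  · exact mul_le_mul_of_nonneg_left (labs_le_vabs _ 0) (labs_nonneg _)
  · exact mul_le_mul hAB (labs_le_vabs _ 1) (labs_nonneg _) (labs_nonneg _)

lemma labs_mul_labs_le_mul_max {A B : Fq[X]} (hy : polyToL Fq B * y 0 = polyToL Fq A * y 1) :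
    labs Fq (polyToL Fq (B * γ 0 0 - A * γ 1 0)) * labs Fq (y 1)
      ≤ labs Fq (polyToL Fq B)
        * max (labs Fq (x 1)) (gabs Fq γ * vabs Fq (act Fq γ x - y)) := by
  set η := act Fq γ x - y
  -- `x 1` is the second coordinate of `γ⁻¹ (y + η)`
  have hrow : polyToL Fq (B * γ 0 0 - A * γ 1 0) * y 1 = polyToL Fq B *
      (x 1 - (polyToL Fq (γ 0 0) * η 1 - polyToL Fq (γ 1 0) * η 0)) := by
    simp only [η, polyToL_sub, polyToL_mul, Pi.sub_apply, act_apply_zero, act_apply_one]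
    linear_combination polyToL Fq (γ 1 0) * hy + polyToL Fq B * x 1 * polyToL_det_fin_two γ
  have hentry (i j l : Fin 2) :
      labs Fq (polyToL Fq (γ i j) * η l) ≤ gabs Fq γ * vabs Fq η := by
    rw [labs_mul]
    exact mul_le_mul (labs_polyToL_le_gabs γ i j) (labs_le_vabs η l) (labs_nonneg _)
      ((labs_nonneg _).trans (labs_polyToL_le_gabs γ i j))
  rw [← labs_mul, hrow, labs_mul]
  refine mul_le_mul_of_nonneg_left ((labs_sub_le _ _).trans (max_le_max le_rfl ?_)) (labs_nonneg _)
  exact (labs_sub_le _ _).trans (max_le (hentry 0 0 1) (hentry 1 0 0))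

lemma labs_cfDen_mul_labs_le_max (C : ℕ → Fq[X]) (hx : x 1 ≠ 0) (hcf : HasCF Fq (x 0 / x 1) C)
    (k : ℕ) {A B s : Fq[X]} (hB : B ≠ 0)
    (he : s * cfDen Fq C (k + 2) = B * γ 0 0 - A * γ 1 0)
    (hg : s * cfNum Fq C (k + 2) = A * γ 1 1 - B * γ 0 1) :
    labs Fq (polyToL Fq (cfDen Fq C (k + 2))) * labs Fq (y 1)
      ≤ max (max (gabs Fq γ * labs Fq (x 1) / labs Fq (polyToL Fq (cfDen Fq C (k + 3))))
          (labs Fq (polyToL Fq B) * labs Fq (x 1)))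
        (labs Fq (polyToL Fq (cfDen Fq C (k + 2))) * vabs Fq (act Fq γ x - y)) := by
  -- `(B, -A) = s (Q_k, -P_k) γ⁻¹`, and `m` is the first entry of `(Q_k, -P_k) γ⁻¹`
  set m := γ 1 0 * cfNum Fq C (k + 2) + γ 1 1 * cfDen Fq C (k + 2)
  have hsm : s * m = B := by
    have hdet : γ 0 0 * γ 1 1 - γ 0 1 * γ 1 0 = 1 := by rw [← Matrix.det_fin_two, γ.det_coe]
    linear_combination γ 1 0 * hg + γ 1 1 * he + B * hdet
  have hm : labs Fq (polyToL Fq m) ≤ labs Fq (polyToL Fq B) := by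
    rw [← hsm, polyToL_mul, labs_mul]
    exact le_mul_of_one_le_left (labs_nonneg _)
      (one_le_labs_polyToL (left_ne_zero_of_mul (hsm ▸ hB)))
  set Q₀ := polyToL Fq (cfDen Fq C (k + 2))
  set δ := Q₀ * (x 0 / x 1) - polyToL Fq (cfNum Fq C (k + 2))
  have hid : Q₀ * y 1
      = polyToL Fq (γ 1 0) * δ * x 1 + polyToL Fq m * x 1 - Q₀ * (act Fq γ x - y) 1 := by
    simp only [δ, m, polyToL_add, polyToL_mul, Pi.sub_apply, act_apply_one]
    field_simp
    ring
  rw [← labs_mul, hid]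
  refine (labs_sub_le _ _).trans (max_le_max ((labs_add_le _ _).trans (max_le_max ?_ ?_)) ?_)
  · rw [labs_mul, labs_mul, hcf k, mul_right_comm, div_eq_mul_inv]
    exact mul_le_mul_of_nonneg_right (mul_le_mul_of_nonneg_right (labs_polyToL_le_gabs γ 1 0)
      (labs_nonneg _)) (inv_nonneg.mpr (labs_nonneg _))
  · rw [labs_mul]
    exact mul_le_mul_of_nonneg_right hm (labs_nonneg _)
  · rw [labs_mul]
    exact mul_le_mul_of_nonneg_left (labs_le_vabs _ 1) (labs_nonneg _)

end Estimates

section Cases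

variable {Fq} (C : ℕ → Fq[X]) {x : Fin 2 → LaurentSeries Fq} (y : Fin 2 → LaurentSeries Fq)
  (γ : SL2 Fq) {A B : Fq[X]} (k : ℕ)

lemma gap_bound_of_row_proportional (hdeg : ∀ i, 1 ≤ i → 0 < (C i).natDegree)
    (hx : x 1 ≠ 0) (hcf : HasCF Fq (x 0 / x 1) C) {s : Fq[X]} (hB : B ≠ 0)
    (he : s * cfDen Fq C (k + 2) = B * γ 0 0 - A * γ 1 0)
    (hg : s * cfNum Fq C (k + 2) = A * γ 1 1 - B * γ 0 1)
    (hk : labs Fq (polyToL Fq B) * labs Fq (x 1)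
      < labs Fq (polyToL Fq (cfDen Fq C (k + 2))) * labs Fq (y 1))
    (hγ : gabs Fq γ * labs Fq (x 1) < labs Fq (y 1) * labs Fq (polyToL Fq (cfDen Fq C (k + 2)))
      * labs Fq (polyToL Fq (cfDen Fq C (k + 3)))) :
    labs Fq (x 1) / (labs Fq (polyToL Fq B) * labs Fq (polyToL Fq (cfDen Fq C (k + 2))))
      ≤ vabs Fq (act Fq γ x - y) := by
  have hbound := labs_cfDen_mul_labs_le_max γ x y C hx hcf k hB he hg
  have hq₀₁ := labs_cfDen_lt_succ C hdeg k
  have hv₀ := (labs_nonneg _).trans (labs_le_vabs (act Fq γ x - y) 0)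
  set v := vabs Fq (act Fq γ x - y)
  set β := labs Fq (polyToL Fq B)
  set q₀ := labs Fq (polyToL Fq (cfDen Fq C (k + 2)))
  have hβ : 1 ≤ β := one_le_labs_polyToL hB
  have hq₀ : 0 < q₀ := labs_cfDen_pos C hdeg k
  rw [div_le_iff₀ (by positivity)]
  by_contra! hη
  have hv : v < labs Fq (y 1) := by
    refine lt_of_mul_lt_mul_right ?_ hq₀.le
    calc v * q₀ ≤ v * (β * q₀) :=
          mul_le_mul_of_nonneg_left (le_mul_of_one_le_left hq₀.le hβ) hv₀
      _ < labs Fq (x 1) := hη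
      _ ≤ β * labs Fq (x 1) := le_mul_of_one_le_left (labs_nonneg _) hβ
      _ < q₀ * labs Fq (y 1) := hk
      _ = labs Fq (y 1) * q₀ := mul_comm _ _
  refine hbound.not_gt (max_lt (max_lt ?_ hk) (mul_lt_mul_of_pos_left hv hq₀))
  rw [div_lt_iff₀ (hq₀.trans hq₀₁)]
  linarith

lemma gap_bound_of_row_not_proportional (hdeg : ∀ i, 1 ≤ i → 0 < (C i).natDegree)
    (hx : x 1 ≠ 0) (hcf : HasCF Fq (x 0 / x 1) C) (hy : y 1 ≠ 0) (hB : B ≠ 0)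
    (hslope : polyToL Fq B * y 0 = polyToL Fq A * y 1)
    (hAB : labs Fq (polyToL Fq A) ≤ labs Fq (polyToL Fq B)) {s t : Fq[X]} (ht : t ≠ 0)
    (he : s * cfDen Fq C (k + 2) + t * cfDen Fq C (k + 3) = B * γ 0 0 - A * γ 1 0)
    (hg : s * cfNum Fq C (k + 2) + t * cfNum Fq C (k + 3) = A * γ 1 1 - B * γ 0 1)
    (hk : labs Fq (polyToL Fq B) * labs Fq (x 1)
      < labs Fq (polyToL Fq (cfDen Fq C (k + 2))) * labs Fq (y 1))
    (hγ : gabs Fq γ * labs Fq (x 1) < labs Fq (y 1) * labs Fq (polyToL Fq (cfDen Fq C (k + 2)))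
      * labs Fq (polyToL Fq (cfDen Fq C (k + 3)))) :
    labs Fq (x 1) / (labs Fq (polyToL Fq B) * labs Fq (polyToL Fq (cfDen Fq C (k + 2))))
      ≤ vabs Fq (act Fq γ x - y) := by
  have hrow := he ▸ labs_mul_labs_le_mul_max γ x y hslope
  have hform := labs_linearForm_le γ x y hslope hAB
  rw [← he, ← hg, mul_sub_mul_eq_mul_mul_div_sub hx, labs_mul] at hform
  have hq₀₁ := labs_cfDen_lt_succ C hdeg k
  have hG := (labs_nonneg _).trans (labs_polyToL_le_gabs γ 0 0)
  set v := vabs Fq (act Fq γ x - y)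
  set β := labs Fq (polyToL Fq B)
  set q₀ := labs Fq (polyToL Fq (cfDen Fq C (k + 2)))
  have hβ : 1 ≤ β := one_le_labs_polyToL hB
  have hq₀ : 0 < q₀ := labs_cfDen_pos C hdeg k
  rw [div_le_iff₀ (by positivity)]
  by_contra! hη
  have hsmall : labs Fq (polyToL Fq (s * cfDen Fq C (k + 2) + t * cfDen Fq C (k + 3)))
      < labs Fq (polyToL Fq (cfDen Fq C (k + 3))) := by
    refine lt_of_mul_lt_mul_right (hrow.trans_lt ?_) (labs_nonneg _)
    rw [mul_max_of_nonneg _ _ (zero_le_one.trans hβ)]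
    refine max_lt (hk.trans (mul_lt_mul_of_pos_right hq₀₁ (labs_pos hy)))
      (lt_of_mul_lt_mul_right ?_ hq₀.le)
    calc β * (gabs Fq γ * v) * q₀ = gabs Fq γ * (v * (β * q₀)) := by ring
      _ ≤ gabs Fq γ * labs Fq (x 1) := mul_le_mul_of_nonneg_left hη.le hG
      _ < _ := hγ
      _ = _ := by ring
  have hlow := mul_le_mul_of_nonneg_left (inv_labs_cfDen_le_labs_sub C hdeg hcf k ht hsmall)
    (labs_nonneg (x 1))
  have := (hlow.trans hform).trans_eq (mul_comm _ _)
  rw [← div_eq_mul_inv, div_le_iff₀ hq₀] at this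
  linarith

end Cases

theorem stmt18 (x : Fin 2 → LaurentSeries Fq) (hx2 : x 1 ≠ 0)
    (C : ℕ → Polynomial Fq) (hdeg : ∀ i, 1 ≤ i → 0 < (C i).natDegree)
    (hcf : HasCF Fq (x 0 / x 1) C)
    (y : Fin 2 → LaurentSeries Fq) (hy2 : y 1 ≠ 0)
    (A B : Polynomial Fq) (hB : B ≠ 0)
    (hAB : labs Fq (polyToL Fq A / polyToL Fq B) ≤ 1)
    (hslope : y 0 / y 1 = polyToL Fq A / polyToL Fq B)
    (k : ℕ)
    (hk : labs Fq (polyToL Fq B * x 1 / y 1) < labs Fq (polyToL Fq (cfDen Fq C (k + 2))))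
    (γ : SL2 Fq)
    (hγ : gabs Fq γ <
      labs Fq (y 1 * polyToL Fq (cfDen Fq C (k + 2)) * polyToL Fq (cfDen Fq C (k + 3)) / x 1)) :
    labs Fq (x 1) / (labs Fq (polyToL Fq B) * labs Fq (polyToL Fq (cfDen Fq C (k + 2))))
      ≤ vabs Fq (act Fq γ x - y) := by
  rw [div_eq_div_iff hy2 (polyToL_ne_zero hB), mul_comm] at hslope
  rw [labs_div, div_le_one (labs_pos (polyToL_ne_zero hB))] at hAB
  rw [labs_div, labs_mul, div_lt_iff₀ (labs_pos hy2)] at hk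
  rw [labs_div, labs_mul, labs_mul, lt_div_iff₀ (labs_pos hx2)] at hγ
  obtain ⟨s, t, he, hg⟩ : ∃ s t : Fq[X],
      s * cfDen Fq C (k + 2) + t * cfDen Fq C (k + 3) = B * γ 0 0 - A * γ 1 0 ∧
      s * cfNum Fq C (k + 2) + t * cfNum Fq C (k + 3) = A * γ 1 1 - B * γ 0 1 :=
    exists_mul_add_mul_eq_of_isUnit (isUnit_cfNum_mul_cfDen_succ_sub C (k + 2)) _ _
  rcases eq_or_ne t 0 with rfl | ht
  · simp only [zero_mul, add_zero] at he hg
    exact gap_bound_of_row_proportional C y γ k hdeg hx2 hcf hB he hg hk hγ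
  · exact gap_bound_of_row_not_proportional C y γ k hdeg hx2 hcf hy2 hB hslope hAB ht he hg hk hγ

end
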